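/- arXiv:2004.00833 — 2 statements merged into one kernel-verified Lean document; each statement's English description precedes it below -/
import Mathlib

section
/- Let F be a nonempty finite set (of flow IDs), let m ≥ 1 and p ≥ 1 be natural numbers, and let H₁, …, H_p be mutually independent random functions from F to {1,…,m} defined on a probability space (Ω, P), each drawn from a pairwise independent hash family, i.e., for every k, every pair of distinct i, j ∈ F, and every a, b ∈ {1,…,m}, P(H_k(i) = a ∧ H_k(j) = b) = 1/m². Then the probability that there exist two distinct flows i, j ∈ F with H_k(i) = H_k(j) for all k = 1, …, p is strictly less than |F|² / (2 mᵖ). -/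
open MeasureTheory ProbabilityTheory
open scoped ENNReal

/-!
For two distinct flows, pairwise independence makes a single block collide with probability
`m · (1/m²) = 1/m`, and independence of the `p` blocks turns this into `m⁻ᵖ` for a collision in
every block. A union bound over the `C(|F|, 2) < |F|²/2` unordered pairs finishes the proof.
-/

theorem Nat.two_mul_choose_two_lt_sq {n : ℕ} (hn : 0 < n) : 2 * n.choose 2 < n ^ 2 := by
  rw [Nat.choose_two_right]
  calc 2 * (n * (n - 1) / 2) ≤ n * (n - 1) := Nat.mul_div_le _ _
    _ < n ^ 2 := by rw [sq]; exact Nat.mul_lt_mul_of_pos_left (by omega) hn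

theorem ENNReal.choose_two_mul_inv_lt {n : ℕ} (hn : 0 < n) {x : ℝ≥0∞} (hx0 : x ≠ 0)
    (hx : x ≠ ∞) :
    (n.choose 2 : ℝ≥0∞) * x⁻¹ < (n : ℝ≥0∞) ^ 2 / (2 * x) := by
  have hlt : ((2 * n.choose 2 : ℕ) : ℝ≥0∞) < (n ^ 2 : ℕ) := by
    exact_mod_cast Nat.two_mul_choose_two_lt_sq hn
  calc (n.choose 2 : ℝ≥0∞) * x⁻¹ = ((2 * n.choose 2 : ℕ) : ℝ≥0∞) / (2 * x) := by
        rw [Nat.cast_mul, Nat.cast_ofNat, ENNReal.mul_div_mul_left _ _ two_ne_zero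
          ENNReal.ofNat_ne_top, div_eq_mul_inv]
    _ < (n ^ 2 : ℕ) / (2 * x) := ENNReal.div_lt_div_right (mul_ne_zero two_ne_zero hx0)
        (ENNReal.mul_ne_top ENNReal.ofNat_ne_top hx) hlt
    _ = (n : ℝ≥0∞) ^ 2 / (2 * x) := by rw [Nat.cast_pow]

section

variable {Ω : Type*} [MeasurableSpace Ω] {P : Measure Ω}

theorem measure_setOf_eq_le_card_mul {β : Type*} [Fintype β] (X Y : Ω → β) {c : ℝ≥0∞}
    (h : ∀ a, P {ω | X ω = a ∧ Y ω = a} ≤ c) :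
    P {ω | X ω = Y ω} ≤ Fintype.card β * c := calc
  P {ω | X ω = Y ω} = P (⋃ a, {ω | X ω = a ∧ Y ω = a}) := by
    congr 1; ext ω; simp [eq_comm]
  _ ≤ ∑ a, P {ω | X ω = a ∧ Y ω = a} := measure_iUnion_fintype_le P _
  _ ≤ ∑ _a : β, c := Finset.sum_le_sum fun a _ => h a
  _ = Fintype.card β * c := by simp

theorem measure_apply_eq_apply_le_inv_card {F β : Type*} [Fintype β] (X : Ω → F → β) {i j : F}
    (hX : ∀ a b, P {ω | X ω i = a ∧ X ω j = b} = 1 / (Fintype.card β : ℝ≥0∞) ^ 2) :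
    P {ω | X ω i = X ω j} ≤ (Fintype.card β : ℝ≥0∞)⁻¹ := by
  refine (measure_setOf_eq_le_card_mul _ _ fun a => (hX a a).le).trans ?_
  rcases eq_or_ne (Fintype.card β) 0 with h | h
  · simp [h]
  · rw [one_div, ENNReal.inv_pow, sq, ← mul_assoc,
      ENNReal.mul_inv_cancel (by simpa) (ENNReal.natCast_ne_top _), one_mul]

theorem ProbabilityTheory.iIndepFun.measure_forall_apply_eq {ι F β : Type*} [Fintype ι]
    [MeasurableSpace β] [MeasurableEq β] {H : ι → Ω → F → β} (hH : iIndepFun H P) (i j : F) :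
    P {ω | ∀ k, H k ω i = H k ω j} = ∏ k, P {ω | H k ω i = H k ω j} := by
  have := hH.measure_inter_preimage_eq_mul Finset.univ (sets := fun _ => {f | f i = f j})
    fun _ _ => measurableSet_eq_fun (measurable_pi_apply i) (measurable_pi_apply j)
  simpa [Set.iInter_ofPred] using this

theorem ProbabilityTheory.iIndepFun.measure_forall_apply_eq_le {ι F β : Type*} [Fintype ι]
    [Fintype β] [MeasurableSpace β] [MeasurableEq β] {H : ι → Ω → F → β} (hH : iIndepFun H P)
    {i j : F} (hpair : ∀ k a b, P {ω | H k ω i = a ∧ H k ω j = b} =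
      1 / (Fintype.card β : ℝ≥0∞) ^ 2) :
    P {ω | ∀ k, H k ω i = H k ω j} ≤ ((Fintype.card β : ℝ≥0∞) ^ Fintype.card ι)⁻¹ := calc
  P {ω | ∀ k, H k ω i = H k ω j} = ∏ k, P {ω | H k ω i = H k ω j} :=
    hH.measure_forall_apply_eq i j
  _ ≤ ∏ _k : ι, (Fintype.card β : ℝ≥0∞)⁻¹ :=
    Finset.prod_le_prod' fun k _ => measure_apply_eq_apply_le_inv_card (H k) (hpair k)
  _ = ((Fintype.card β : ℝ≥0∞) ^ Fintype.card ι)⁻¹ := by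
    rw [Finset.prod_const, Finset.card_univ, ENNReal.inv_pow]

theorem measure_exists_ne_le_choose_two_mul {F : Type*} [Fintype F] (R : Ω → F → F → Prop)
    (hR : ∀ ω i j, R ω i j → R ω j i) {c : ℝ≥0∞} (h : ∀ i j, i ≠ j → P {ω | R ω i j} ≤ c) :
    P {ω | ∃ i j, i ≠ j ∧ R ω i j} ≤ (Fintype.card F).choose 2 * c := by
  classical
  let : LinearOrder F := LinearOrder.lift' _ (Fintype.equivFin F).injective
  set S : Finset (F × F) := {x ∈ Finset.univ ×ˢ Finset.univ | x.1 < x.2}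
  have hcover : {ω | ∃ i j, i ≠ j ∧ R ω i j} ⊆ ⋃ x ∈ S, {ω | R ω x.1 x.2} := by
    rintro ω ⟨i, j, hij, hRij⟩
    rcases hij.lt_or_gt with hlt | hlt
    · exact Set.mem_biUnion (x := (i, j)) (by simp [S, hlt]) hRij
    · exact Set.mem_biUnion (x := (j, i)) (by simp [S, hlt]) (hR ω i j hRij)
  calc P {ω | ∃ i j, i ≠ j ∧ R ω i j} ≤ ∑ x ∈ S, P {ω | R ω x.1 x.2} :=
        (measure_mono hcover).trans (measure_biUnion_finset_le _ _)
    _ ≤ ∑ _x ∈ S, c := Finset.sum_le_sum fun x hx => h _ _ (Finset.mem_filter.1 hx).2.ne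
    _ = (Fintype.card F).choose 2 * c := by
        rw [Finset.sum_const, nsmul_eq_mul, Finset.card_product_filter_lt, Finset.card_univ]

end

theorem mpu_flow_collision_general
    {Ω : Type*} [MeasurableSpace Ω] (P : Measure Ω) [IsProbabilityMeasure P]
    {F : Type*} [Fintype F] [Nonempty F]
    {m p : ℕ} (hm : 1 ≤ m)
    (H : Fin p → Ω → F → Fin m)
    (hindep : iIndepFun H P)
    (hpairwise : ∀ k : Fin p, ∀ i j : F, i ≠ j → ∀ a b : Fin m,
      P {ω | H k ω i = a ∧ H k ω j = b} = 1 / (m : ℝ≥0∞) ^ 2) :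
    P {ω | ∃ i j : F, i ≠ j ∧ ∀ k : Fin p, H k ω i = H k ω j}
      < (Fintype.card F : ℝ≥0∞) ^ 2 / (2 * (m : ℝ≥0∞) ^ p) := by
  have hpair : ∀ i j : F, i ≠ j →
      P {ω | ∀ k, H k ω i = H k ω j} ≤ ((m : ℝ≥0∞) ^ p)⁻¹ := fun i j hij => by
    simpa using hindep.measure_forall_apply_eq_le (by simpa using hpairwise · i j hij)
  have hmp : (m : ℝ≥0∞) ^ p ≠ 0 := pow_ne_zero _ (Nat.cast_ne_zero.2 (by omega))
  calc P {ω | ∃ i j : F, i ≠ j ∧ ∀ k : Fin p, H k ω i = H k ω j}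
      ≤ (Fintype.card F).choose 2 * ((m : ℝ≥0∞) ^ p)⁻¹ :=
        measure_exists_ne_le_choose_two_mul _ (fun ω i j h k => (h k).symm) hpair
    _ < (Fintype.card F : ℝ≥0∞) ^ 2 / (2 * (m : ℝ≥0∞) ^ p) :=
        ENNReal.choose_two_mul_inv_lt Fintype.card_pos hmp
          (ENNReal.pow_ne_top (ENNReal.natCast_ne_top m))

/-- Lemma 1 (MPU flow collision): if `p` mutually independent hash functions,
each drawn from a pairwise independent family mapping flows `F` to rows `Fin m`,
are used to assign each flow to `p` rows, then the probability that two distinct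
flows are assigned to the same `p` rows is less than `|F|² / (2 mᵖ)`. -/
theorem mpu_flow_collision
    {Ω : Type*} [MeasurableSpace Ω] (P : Measure Ω) [IsProbabilityMeasure P]
    {F : Type*} [Fintype F] [Nonempty F]
    {m p : ℕ} (hm : 1 ≤ m) (hp : 1 ≤ p)
    (H : Fin p → Ω → F → Fin m)
    (hindep : iIndepFun H P)
    (hpairwise : ∀ k : Fin p, ∀ i j : F, i ≠ j → ∀ a b : Fin m,
      P {ω | H k ω i = a ∧ H k ω j = b} = 1 / (m : ℝ≥0∞) ^ 2) :
    P {ω | ∃ i j : F, i ≠ j ∧ ∀ k : Fin p, H k ω i = H k ω j}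
      < (Fintype.card F : ℝ≥0∞) ^ 2 / (2 * (m : ℝ≥0∞) ^ p) :=
  mpu_flow_collision_general P hm H hindep hpairwise
end

section
/- Let T be a finite index set and let (φ_t)_{t ∈ T} be i.i.d. random variables, each uniformly distributed on the interval [0,1], defined on a probability space (Ω, P). Then for every pair of nonempty subsets A, B ⊆ T, the probability that min_{t ∈ A} φ_t = min_{t ∈ B} φ_t equals |A ∩ B| / |A ∪ B|. -/
/-!
Almost surely the `φ t` are pairwise distinct (independent coordinates with an atomless law
never tie), so `A ∪ B` has a unique argmin, and the two minima agree exactly when that argmin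
lies in `A ∩ B`. The joint law is the product measure, which is invariant under permuting
coordinates, so each point of `A ∪ B` is the argmin with the same probability `1 / |A ∪ B|`.
-/

open MeasureTheory ProbabilityTheory Finset
open scoped ENNReal

lemma ProbabilityTheory.IndepFun.measure_eq_eq_zero {Ω α : Type*} [MeasurableSpace Ω]
    [MeasurableSpace α] [MeasurableEq α] {P : Measure Ω} [IsFiniteMeasure P] {X Y : Ω → α}
    (hXY : IndepFun X Y P) (hX : AEMeasurable X P) (hY : AEMeasurable Y P)
    [NullSingletonClass (P.map Y)] : P {ω | X ω = Y ω} = 0 := by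
  have hlaw := (indepFun_iff_map_prod_eq_prod_map_map hX hY).mp hXY
  have : {ω | X ω = Y ω} = (fun ω => (X ω, Y ω)) ⁻¹' Set.diagonal α := rfl
  rw [this, ← Measure.map_apply_of_aemeasurable (hX.prodMk hY) measurableSet_diagonal, hlaw,
    Measure.prod_apply measurableSet_diagonal]
  simp [Set.diagonal]

section StrictArgmin

variable {T α : Type*} [LinearOrder α]

def strictArgminSet (U : Finset T) (t : T) : Set (T → α) :=
  {f | ∀ s ∈ U, s ≠ t → f t < f s}

lemma pairwiseDisjoint_strictArgminSet (U : Finset T) :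
    (U : Set T).PairwiseDisjoint (strictArgminSet (α := α) U) := fun t ht t' ht' htt' =>
  Set.disjoint_left.mpr fun _ hf hf' => lt_asymm (hf t' ht' htt'.symm) (hf' t ht htt')

lemma comp_mem_strictArgminSet_iff {U : Finset T} {σ : Equiv.Perm T}
    (hσ : ∀ s, σ s ∈ U ↔ s ∈ U) {t : T} {f : T → α} :
    f ∘ σ ∈ strictArgminSet U t ↔ f ∈ strictArgminSet U (σ t) := by
  simp only [strictArgminSet, Set.mem_ofPred_eq, Function.comp_apply]
  conv_rhs => rw [σ.symm.forall_congr_left]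
  simp [hσ, σ.injective.ne_iff]

lemma inf'_eq_of_mem_strictArgminSet {U A : Finset T} (hA : A.Nonempty) (hAU : A ⊆ U) {t : T}
    (ht : t ∈ A) {f : T → α} (hf : f ∈ strictArgminSet U t) : A.inf' hA f = f t := by
  refine le_antisymm (inf'_le f ht) (le_inf' hA f fun s hs => ?_)
  rcases eq_or_ne s t with rfl | hst
  · exact le_rfl
  · exact (hf s (hAU hs) hst).le

lemma inf'_eq_inf'_iff_of_injective [DecidableEq T] {A B : Finset T} (hA : A.Nonempty)
    (hB : B.Nonempty) {f : T → α} (hf : Function.Injective f) :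
    A.inf' hA f = B.inf' hB f ↔ ∃ t ∈ A ∩ B, f ∈ strictArgminSet (A ∪ B) t := by
  constructor
  · intro h
    obtain ⟨a, ha, hfa⟩ := exists_mem_eq_inf' hA f
    obtain ⟨b, hb, hfb⟩ := exists_mem_eq_inf' hB f
    obtain rfl : a = b := hf (hfa ▸ hfb ▸ h)
    refine ⟨a, mem_inter.mpr ⟨ha, hb⟩, fun s hs hsa => ?_⟩
    have hle : f a ≤ f s := by
      rcases mem_union.mp hs with hs | hs
      · exact hfa ▸ inf'_le f hs
      · exact hfb ▸ inf'_le f hs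
    exact hle.lt_of_ne (hf.ne hsa.symm)
  · rintro ⟨t, ht, hft⟩
    rw [mem_inter] at ht
    rw [inf'_eq_of_mem_strictArgminSet hA subset_union_left ht.1 hft,
      inf'_eq_of_mem_strictArgminSet hB subset_union_right ht.2 hft]

lemma measurableSet_strictArgminSet (U : Finset T) (t : T) :
    MeasurableSet (strictArgminSet (α := ℝ) U t) := by
  have : strictArgminSet (α := ℝ) U t = ⋂ s ∈ U, ⋂ (_ : s ≠ t), {f | f t < f s} := by
    ext f; simp [strictArgminSet]
  rw [this]
  exact U.measurableSet_biInter fun s _ => .iInter fun _ =>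
    measurableSet_lt (measurable_pi_apply t) (measurable_pi_apply s)

lemma measure_biUnion_strictArgminSet (ν : Measure (T → ℝ)) {U V : Finset T} (hVU : V ⊆ U) :
    ν (⋃ t ∈ V, strictArgminSet U t) = ∑ t ∈ V, ν (strictArgminSet U t) :=
  measure_biUnion_finset ((pairwiseDisjoint_strictArgminSet U).subset (by simpa using hVU))
    fun t _ => measurableSet_strictArgminSet U t

end StrictArgmin

section Pi

variable {T : Type*} [Fintype T] {μ : Measure ℝ}

lemma ae_injective_pi [IsProbabilityMeasure μ] [NullSingletonClass μ] :
    ∀ᵐ f ∂(Measure.pi fun _ : T => μ), Function.Injective f := by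
  have hcoord : iIndepFun (fun t (f : T → ℝ) => f t) (Measure.pi fun _ : T => μ) :=
    iIndepFun_pi (X := fun _ => id) fun _ => aemeasurable_id
  have hties (s t : T) : ∀ᵐ f ∂(Measure.pi fun _ : T => μ), s ≠ t → f s ≠ f t := by
    by_cases hst : s = t
    · exact .of_forall fun _ h => absurd hst h
    have : NullSingletonClass ((Measure.pi fun _ : T => μ).map (fun f => f t)) := by
      rw [(measurePreserving_eval _ t).map_eq]; infer_instance
    filter_upwards [measure_eq_zero_iff_ae_notMem.mp ((hcoord.indepFun hst).measure_eq_eq_zero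
      (measurable_pi_apply s).aemeasurable (measurable_pi_apply t).aemeasurable)] with f hf _
    exact hf
  filter_upwards [ae_all_iff.2 fun s => ae_all_iff.2 (hties s)] with f hf s t
  exact not_imp_not.mp (hf s t)

lemma measure_pi_strictArgminSet_eq [SigmaFinite μ] (U : Finset T) {t t' : T} (ht : t ∈ U)
    (ht' : t' ∈ U) :
    Measure.pi (fun _ : T => μ) (strictArgminSet U t)
      = Measure.pi (fun _ : T => μ) (strictArgminSet U t') := by
  classical
  set σ := Equiv.swap t t'
  have hσU (s : T) : σ s ∈ U ↔ s ∈ U := by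
    rw [Equiv.swap_apply_def]; split_ifs <;> simp_all
  have hperm : MeasurePreserving (fun f : T → ℝ => f ∘ σ) (Measure.pi fun _ : T => μ)
      (Measure.pi fun _ : T => μ) :=
    measurePreserving_arrowCongr' _ _ σ.symm (MeasurableEquiv.refl ℝ) fun _ => .id μ
  have hpre : (fun f : T → ℝ => f ∘ σ) ⁻¹' strictArgminSet U t' = strictArgminSet U t := by
    ext f
    simp only [Set.mem_preimage, comp_mem_strictArgminSet_iff hσU, σ, Equiv.swap_apply_right]
  rw [← hpre, hperm.measure_preimage (measurableSet_strictArgminSet U t').nullMeasurableSet]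

variable [IsProbabilityMeasure μ] [NullSingletonClass μ]

lemma setOf_inf'_eq_inf'_ae_eq_biUnion [DecidableEq T] {A B : Finset T} (hA : A.Nonempty)
    (hB : B.Nonempty) :
    {f : T → ℝ | A.inf' hA f = B.inf' hB f}
      =ᵐ[Measure.pi fun _ : T => μ] ⋃ t ∈ A ∩ B, strictArgminSet (A ∪ B) t := by
  rw [Filter.eventuallyEq_set]
  filter_upwards [ae_injective_pi] with f hf
  simpa using inf'_eq_inf'_iff_of_injective hA hB hf

lemma measure_pi_strictArgminSet {U : Finset T} {t : T} (ht : t ∈ U) :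
    Measure.pi (fun _ : T => μ) (strictArgminSet U t) = (#U : ℝ≥0∞)⁻¹ := by
  classical
  have htotal : ∑ s ∈ U, Measure.pi (fun _ : T => μ) (strictArgminSet U s) = 1 := by
    have h := measure_congr (setOf_inf'_eq_inf'_ae_eq_biUnion (μ := μ) ⟨t, ht⟩ ⟨t, ht⟩)
    rw [inter_self, union_self, measure_biUnion_strictArgminSet _ subset_rfl] at h
    simpa using h.symm
  rw [sum_congr rfl fun s hs => measure_pi_strictArgminSet_eq U hs ht, sum_const,
    nsmul_eq_mul] at htotal
  exact ENNReal.eq_inv_of_mul_eq_one_left (by rwa [mul_comm])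

theorem measure_pi_inf'_eq_inf' [DecidableEq T] {A B : Finset T} (hA : A.Nonempty)
    (hB : B.Nonempty) :
    Measure.pi (fun _ : T => μ) {f | A.inf' hA f = B.inf' hB f} = #(A ∩ B) / #(A ∪ B) := by
  rw [measure_congr (setOf_inf'_eq_inf'_ae_eq_biUnion hA hB),
    measure_biUnion_strictArgminSet _ (inter_subset_union (s := A) (t := B)),
    sum_congr rfl fun t ht => measure_pi_strictArgminSet (inter_subset_union ht), sum_const,
    nsmul_eq_mul, div_eq_mul_inv]

end Pi

/-- For i.i.d. uniform-[0,1] random variables `(φ_t)_{t ∈ T}`, the probability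
that the minimum over a nonempty set `A` equals the minimum over a nonempty set
`B` is `|A ∩ B| / |A ∪ B|` (min-hash collision probability). -/
theorem minhash_equal_min_prob
    {Ω : Type*} [MeasurableSpace Ω] (P : Measure Ω) [IsProbabilityMeasure P]
    {T : Type*} [Fintype T] [DecidableEq T]
    (φ : T → Ω → ℝ)
    (hmeas : ∀ t, Measurable (φ t))
    (hindep : iIndepFun φ P)
    (hunif : ∀ t, Measure.map (φ t) P = volume.restrict (Set.Icc (0 : ℝ) 1)) :
    ∀ (A B : Finset T) (hA : A.Nonempty) (hB : B.Nonempty),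
      P {ω | A.inf' hA (fun t => φ t ω) = B.inf' hB (fun t => φ t ω)}
        = ((A ∩ B).card : ℝ≥0∞) / ((A ∪ B).card : ℝ≥0∞) := by
  intro A B hA hB
  have : IsProbabilityMeasure (volume.restrict (Set.Icc (0 : ℝ) 1)) := ⟨by simp⟩
  have hlaw : P.map (fun ω t => φ t ω) = Measure.pi fun _ => volume.restrict (Set.Icc 0 1) := by
    rw [(iIndepFun_iff_map_fun_eq_pi_map fun t => (hmeas t).aemeasurable).mp hindep]
    simp_rw [hunif]
  have hinf {C : Finset T} (hC : C.Nonempty) : Measurable fun f : T → ℝ => C.inf' hC f :=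
    (Continuous.finset_inf'_apply hC fun t _ => continuous_apply t).measurable
  have h := measure_pi_inf'_eq_inf' (μ := volume.restrict (Set.Icc (0 : ℝ) 1)) hA hB
  rwa [← hlaw, Measure.map_apply (measurable_pi_lambda _ hmeas)
    (measurableSet_eq_fun (hinf hA) (hinf hB))] at h
end
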